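/- Let F : T → T be a polynomial-like branched covering of a simplicial tree with global degree D = deg(F), and let μ : V(T) → ℚ be the mass function. Then for every k ≥ 0 and every vertex v ∈ V_k(T) = {v : h(v) = −k·N(F)}, one has μ(v) ≤ ((D − 1)/D)^k. -/

import Mathlib

open SimpleGraph Function Opposite

/-- A locally finite simplicial tree together with a self-map that is a
branched covering: a simplicial map (edges map onto edges) such that the
induced map on edges adjacent to any vertex is surjective onto the edges
adjacent to the image vertex, and every vertex has finitely many preimages. -/
structure TreeDyn (V : Type) where
  G : SimpleGraph V
  isTree : G.IsTree
  locFin : ∀ v : V, (G.neighborSet v).Finite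
  F : V → V
  adjMap : ∀ ⦃v w : V⦄, G.Adj v w → G.Adj (F v) (F w)
  edgeSurj : ∀ ⦃v w' : V⦄, G.Adj (F v) w' → ∃ w : V, G.Adj v w ∧ F w = w'
  finFibers : ∀ v' : V, {v : V | F v = v'}.Finite

namespace TreeDyn

variable {V : Type}

/-- A local degree function for the branched covering `T.F`: positive on
vertices and edges (edges adjacent to `v` are recorded by their other
endpoint), symmetric on edges, satisfying the Riemann–Hurwitz style
inequality `2 deg(v) - 2 ≥ Σ (deg e - 1)` at each vertex, and the local
equality `deg v = Σ {deg e' : e' adjacent to v, F(e') = F(e)}` for each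
edge `e` adjacent to `v`. -/
def IsLocalDeg (T : TreeDyn V) (dV : V → ℕ) (dE : V → V → ℕ) : Prop :=
  (∀ v w : V, dE v w = dE w v) ∧
  (∀ v : V, 0 < dV v) ∧
  (∀ ⦃v w : V⦄, T.G.Adj v w → 0 < dE v w) ∧
  (∀ v : V, (∑ᶠ w ∈ T.G.neighborSet v, (dE v w - 1)) + 2 ≤ 2 * dV v) ∧
  (∀ ⦃v w : V⦄, T.G.Adj v w →
    dV v = ∑ᶠ w' ∈ {w' : V | T.G.Adj v w' ∧ T.F w' = T.F w}, dE v w')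

/-- `x` and `y` are in the same grand orbit if `F^[n] x = F^[m] y` for some `n, m > 0`. -/
def GrandOrbit (T : TreeDyn V) (x y : V) : Prop :=
  ∃ n m : ℕ, 0 < n ∧ 0 < m ∧ T.F^[n] x = T.F^[m] y

end TreeDyn

/-- The natural topology on the space of ends of a graph: the subspace
topology induced from the product of the (discrete) spaces of components
of complements of finite sets. -/
def endTop {V : Type} (G : SimpleGraph V) : TopologicalSpace G.end :=
  TopologicalSpace.induced Subtype.val
    (⨅ K : (Finset V)ᵒᵖ, TopologicalSpace.induced (fun f => f K) ⊥)

/-- An end is isolated if it is an isolated point of the space of ends. -/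
def IsIsolatedEnd {V : Type} (G : SimpleGraph V) (e : G.end) : Prop :=
  @IsOpen G.end (endTop G) {e}

namespace TreeDyn

variable {V : Type}

/-- `T` is polynomial-like with distinguished end `infty`:
(II) a local degree function exists, (I) `infty` is the unique isolated end,
(III) no vertex has valence one, and (IV) the grand orbit of every vertex
contains a vertex of valence at least three. -/
def IsPolyLike (T : TreeDyn V) (infty : T.G.end) : Prop :=
  (∃ dV dE, T.IsLocalDeg dV dE) ∧
  IsIsolatedEnd T.G infty ∧
  (∀ e : T.G.end, IsIsolatedEnd T.G e → e = infty) ∧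
  (∀ v : V, (T.G.neighborSet v).ncard ≠ 1) ∧
  (∀ v : V, ∃ w : V, T.GrandOrbit v w ∧ 3 ≤ (T.G.neighborSet w).ncard)

/-- The vertex `x` lies below the vertex `v` (the path from `x` to the
end `infty` passes through `v`): either `x = v`, or `x` and `infty`
determine different components of the complement of `{v}`. -/
def Below (T : TreeDyn V) (infty : T.G.end) (v x : V) : Prop :=
  x = v ∨ ∃ h : x ∉ (({v} : Finset V) : Set V),
    T.G.componentComplMk h ≠ infty.val (op ({v} : Finset V))

/-- The end `p` lies below the vertex `v` (the path from `p` to `infty`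
passes through `v`). -/
def EndBelow (T : TreeDyn V) (infty : T.G.end) (v : V) (p : T.G.end) : Prop :=
  p.val (op ({v} : Finset V)) ≠ infty.val (op ({v} : Finset V))

/-- `v₀` is the base of the tree: the vertex of valence ≥ 3 closest to
`infty`, i.e. every vertex of valence ≥ 3 lies below it. -/
def IsBase (T : TreeDyn V) (infty : T.G.end) (v₀ : V) : Prop :=
  3 ≤ (T.G.neighborSet v₀).ncard ∧
  ∀ w : V, 3 ≤ (T.G.neighborSet w).ncard → T.Below infty v₀ w

open Classical in
/-- The combinatorial height relative to the base `v₀`: `|h v|` is the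
graph distance to `v₀`, with `h v ≥ 0` exactly when `v` lies on the ray
from `v₀` to `infty` (i.e. `v₀` lies below `v`). -/
noncomputable def height (T : TreeDyn V) (infty : T.G.end) (v₀ : V) (v : V) : ℤ :=
  if T.Below infty v v₀ then (T.G.dist v₀ v : ℤ) else -(T.G.dist v₀ v : ℤ)

/-- `Dg` is the global degree of `T.F`: for every edge `{v,w}`, the sum of
the degrees of the edges mapping onto it equals `Dg`. -/
def IsGlobalDeg (T : TreeDyn V) (dE : V → V → ℕ) (Dg : ℕ) : Prop :=
  ∀ ⦃v w : V⦄, T.G.Adj v w →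
    Dg = ∑ᶠ a ∈ {a : V | T.F a = v}, ∑ᶠ b ∈ {b : V | T.G.Adj a b ∧ T.F b = w}, dE a b

/-- The critical multiplicity of a vertex. -/
noncomputable def multV (T : TreeDyn V) (dV : V → ℕ) (dE : V → V → ℕ) (v : V) : ℕ :=
  2 * dV v - 2 - ∑ᶠ w ∈ T.G.neighborSet v, (dE v w - 1)

/-- The critical multiplicity of an end `p ≠ infty`: the limiting
(= minimal) value of `dV` along the path from `infty` to `p`, minus one. -/
noncomputable def multEnd (T : TreeDyn V) (infty : T.G.end) (dV : V → ℕ) (p : T.G.end) : ℕ :=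
  sInf {d : ℕ | ∃ v : V, T.EndBelow infty v p ∧ dV v = d} - 1

/-- `μ` is the mass function: `μ v = 1` for `h(v) ≥ 0` and
`μ(F v) = (deg F / deg v) · μ v`. -/
def IsMass (T : TreeDyn V) (infty : T.G.end) (v₀ : V) (dV : V → ℕ) (Dg : ℕ)
    (μ : V → ℚ) : Prop :=
  (∀ v : V, 0 ≤ T.height infty v₀ v → μ v = 1) ∧
  (∀ v : V, μ (T.F v) = ((Dg : ℚ) / (dV v : ℚ)) * μ v)

end TreeDyn

/-!
Since `μ (F v) = (deg F / deg v) · μ v` and `F` maps `V_{k+1}` into `V_k`, the bound follows by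
induction on `k` once `deg v ≤ deg F - 1` for every vertex `v` of negative height. The local
degrees over the fibre of `F v` add up to `deg F`, so this holds as soon as `F v` has a second
preimage. Every vertex `y` with `h y < N` has two preimages: for `h y = N - 1` take two
neighbours of the base of height `-1` (the base has valence at least three, and only one
neighbour of height `1`); for smaller `h y`, lift the edge from `y` to its neighbour of height
`h y + 1` at two preimages of that neighbour.
-/

namespace SimpleGraph

variable {V : Type*} {G : SimpleGraph V}

theorem IsTree.length_eq_dist_of_isPath (hT : G.IsTree) {a b : V} {p : G.Walk a b}
    (hp : p.IsPath) : p.length = G.dist a b := by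
  obtain ⟨q, hq, hlen⟩ := hT.connected.exists_path_of_dist a b
  rw [(hT.existsUnique_path a b).unique hp hq, hlen]

theorem IsTree.dist_add_dist_of_mem_support (hT : G.IsTree) {a b c : V} {p : G.Walk a b}
    (hp : p.IsPath) (hc : c ∈ p.support) : G.dist a c + G.dist c b = G.dist a b := by
  classical
  rw [← hT.length_eq_dist_of_isPath (hp.takeUntil hc),
    ← hT.length_eq_dist_of_isPath (hp.dropUntil hc), ← hT.length_eq_dist_of_isPath hp,
    ← Walk.length_append, Walk.take_spec]

theorem IsTree.eq_of_mem_support_of_dist_eq (hT : G.IsTree) {a b c c' : V} {p : G.Walk a b}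
    (hp : p.IsPath) (hc : c ∈ p.support) (hc' : c' ∈ p.support)
    (h : G.dist a c = G.dist a c') : c = c' := by
  classical
  rw [← p.getVert_length_takeUntil hc, ← p.getVert_length_takeUntil hc',
    hT.length_eq_dist_of_isPath (hp.takeUntil hc),
    hT.length_eq_dist_of_isPath (hp.takeUntil hc'), h]

theorem IsTree.eq_of_adj_of_dist_add_one_eq (hT : G.IsTree) {a u z z' : V}
    (hz : G.Adj u z) (hz' : G.Adj u z') (h : G.dist a z + 1 = G.dist a u)
    (h' : G.dist a z' + 1 = G.dist a u) : z = z' := by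
  obtain ⟨q, -, hq⟩ := hT.connected.exists_path_of_dist z a
  obtain ⟨q', -, hq'⟩ := hT.connected.exists_path_of_dist z' a
  have hpath : (Walk.cons hz q).IsPath :=
    Walk.isPath_of_length_eq_dist _ (by rw [Walk.length_cons, hq, dist_comm, h, dist_comm])
  have hpath' : (Walk.cons hz' q').IsPath :=
    Walk.isPath_of_length_eq_dist _ (by rw [Walk.length_cons, hq', dist_comm, h', dist_comm])
  simpa using congrArg Walk.snd ((hT.existsUnique_path u a).unique hpath hpath')

theorem exists_adj_mem_componentCompl_singleton (hG : G.Preconnected) (y : V)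
    (C : G.ComponentCompl (({y} : Finset V) : Set V)) : ∃ z, G.Adj y z ∧ z ∈ C := by
  obtain ⟨⟨z, k⟩, hzC, hk, hzk⟩ := C.exists_adj_boundary_pair hG ⟨y, by simp⟩
  simp only [Finset.coe_singleton, Set.mem_singleton_iff] at hk
  exact ⟨z, hk ▸ hzk.symm, hzC⟩

theorem componentComplMk_eq_of_walk {K : Set V} {a b : V} (ha : a ∉ K) (hb : b ∉ K)
    (p : G.Walk a b) (hp : ∀ c ∈ p.support, c ∉ K) :
    G.componentComplMk ha = G.componentComplMk hb := by
  induction p with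
  | nil => rfl
  | @cons u v w huv q ih =>
    have hv : v ∉ K := hp v (by simp)
    exact (G.componentComplMk_eq_of_adj ha hv huv).trans
      (ih hv hb fun c hc => hp c (List.mem_cons_of_mem u hc))

theorem exists_walk_of_componentComplMk_eq {K : Set V} {a b : V} (ha : a ∉ K) (hb : b ∉ K)
    (h : G.componentComplMk ha = G.componentComplMk hb) :
    ∃ p : G.Walk a b, ∀ c ∈ p.support, c ∉ K := by
  obtain ⟨q⟩ := ConnectedComponent.exact h
  refine ⟨q.map (Embedding.induce Kᶜ).toHom, fun c hc => ?_⟩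
  replace hc : c ∈ (q.map (Embedding.induce Kᶜ).toHom).support := hc
  rw [Walk.support_map, List.mem_map] at hc
  obtain ⟨⟨c, hcK⟩, -, rfl⟩ := hc
  exact hcK

theorem IsTree.componentComplMk_eq_iff (hT : G.IsTree) {K : Set V} {a b : V} {p : G.Walk a b}
    (hp : p.IsPath) (ha : a ∉ K) (hb : b ∉ K) :
    G.componentComplMk ha = G.componentComplMk hb ↔ ∀ c ∈ p.support, c ∉ K := by
  classical
  refine ⟨fun h => ?_, componentComplMk_eq_of_walk ha hb p⟩
  obtain ⟨q, hq⟩ := exists_walk_of_componentComplMk_eq ha hb h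
  rw [(hT.existsUnique_path a b).unique hp q.bypass_isPath]
  exact fun c hc => hq c (q.support_bypass_subset_support hc)

theorem IsTree.componentComplMk_singleton_eq_iff (hT : G.IsTree) {y a b : V}
    {p : G.Walk a b} (hp : p.IsPath) (ha : a ∉ (({y} : Finset V) : Set V))
    (hb : b ∉ (({y} : Finset V) : Set V)) :
    G.componentComplMk ha = G.componentComplMk hb ↔ y ∉ p.support := by
  simp only [hT.componentComplMk_eq_iff hp, Finset.coe_singleton, Set.mem_singleton_iff]
  exact ⟨fun h hy => h y hy rfl, by rintro h c hc rfl; exact h hc⟩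

theorem IsTree.componentComplMk_ne_iff_mem_support (hT : G.IsTree) {y a b : V}
    {p : G.Walk a b} (hp : p.IsPath) (ha : a ∉ (({y} : Finset V) : Set V))
    (hb : b ∉ (({y} : Finset V) : Set V)) :
    G.componentComplMk ha ≠ G.componentComplMk hb ↔ y ∈ p.support := by
  rw [Ne, hT.componentComplMk_singleton_eq_iff hp, not_not]

theorem IsTree.componentComplMk_eq_iff_ne_of_adj (hT : G.IsTree) {x y z : V} (hyz : G.Adj y z)
    (hxy : x ∉ (({y} : Finset V) : Set V)) (hzy : z ∉ (({y} : Finset V) : Set V))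
    (hxz : x ∉ (({z} : Finset V) : Set V)) (hyz' : y ∉ (({z} : Finset V) : Set V)) :
    G.componentComplMk hxy = G.componentComplMk hzy ↔
      G.componentComplMk hxz ≠ G.componentComplMk hyz' := by
  obtain ⟨p, hp, -⟩ := hT.connected.exists_path_of_dist x y
  obtain ⟨q, hq, -⟩ := hT.connected.exists_path_of_dist x z
  rw [hT.componentComplMk_singleton_eq_iff hq, hT.componentComplMk_ne_iff_mem_support hp]
  exact ⟨fun hy => by_contra fun hz =>
      hy (hT.isAcyclic.mem_support_of_ne_mem_support_of_adj_of_isPath hq hp hyz.symm hz),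
    hT.isAcyclic.ne_mem_support_of_support_of_adj_of_isPath hp hq hyz⟩

theorem end_exists_componentComplMk_eq_pair (e : G.end) (u u' : V) :
    ∃ (x : V) (hu : x ∉ (({u} : Finset V) : Set V)) (hu' : x ∉ (({u'} : Finset V) : Set V)),
      G.componentComplMk hu = e.val (op {u}) ∧ G.componentComplMk hu' = e.val (op {u'}) := by
  classical
  obtain ⟨x, hx, hmk⟩ := (e.val (op ({u, u'} : Finset V))).exists_eq_mk
  refine ⟨x, fun h => hx (by simp_all), fun h => hx (by simp_all), ?_, ?_⟩
  · exact (end_hom_mk_of_mk G e.prop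
      (CategoryTheory.homOfLE (by simp : ({u} : Finset V) ⊆ {u, u'})).op hx hmk.symm).symm
  · exact (end_hom_mk_of_mk G e.prop
      (CategoryTheory.homOfLE (by simp : ({u'} : Finset V) ⊆ {u, u'})).op hx hmk.symm).symm

end SimpleGraph

namespace TreeDyn

variable {V : Type} {T : TreeDyn V} {infty : T.G.end} {v₀ : V}

theorem height_of_below {v : V} (h : T.Below infty v v₀) :
    T.height infty v₀ v = T.G.dist v₀ v :=
  if_pos h

theorem height_of_not_below {v : V} (h : ¬T.Below infty v v₀) :
    T.height infty v₀ v = -(T.G.dist v₀ v : ℤ) :=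
  if_neg h

theorem natAbs_height (v : V) : (T.height infty v₀ v).natAbs = T.G.dist v₀ v := by
  unfold height
  split <;> simp

theorem height_nonneg_iff {v : V} : 0 ≤ T.height infty v₀ v ↔ T.Below infty v v₀ := by
  refine ⟨fun h => by_contra fun hb => ?_, fun hb => by rw [height_of_below hb]; positivity⟩
  rw [height_of_not_below hb] at h
  have : T.G.dist v₀ v = 0 := by omega
  exact hb (Or.inl (T.isTree.connected.dist_eq_zero_iff.mp this))

theorem Below.componentComplMk_ne {v x : V} (h : T.Below infty v x)
    (hx : x ∉ (({v} : Finset V) : Set V)) :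
    T.G.componentComplMk hx ≠ infty.val (op {v}) := by
  rcases h with rfl | ⟨_, h⟩
  · simp at hx
  · exact h

theorem Below.mem_support {w a x : V} (h : T.Below infty w a)
    (hx : x ∉ (({w} : Finset V) : Set V)) (hmk : T.G.componentComplMk hx = infty.val (op {w}))
    (p : T.G.Walk a x) : w ∈ p.support := by
  by_cases haw : a = w
  · exact haw ▸ p.start_mem_support
  have ha : a ∉ (({w} : Finset V) : Set V) := by simpa using haw
  refine by_contra fun hw => h.componentComplMk_ne ha ?_
  rw [← hmk]
  exact T.G.componentComplMk_eq_of_walk ha hx p fun c hc hcw => hw (by simp_all)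

theorem Below.dist_add_dist {w a x : V} (h : T.Below infty w a)
    (hx : x ∉ (({w} : Finset V) : Set V)) (hmk : T.G.componentComplMk hx = infty.val (op {w})) :
    T.G.dist a w + T.G.dist w x = T.G.dist a x := by
  obtain ⟨p, hp, -⟩ := T.isTree.connected.exists_path_of_dist a x
  exact T.isTree.dist_add_dist_of_mem_support hp (h.mem_support hx hmk p)

theorem Below.antisymm {a b : V} (hab : T.Below infty a b) (hba : T.Below infty b a) : a = b := by
  obtain ⟨x, hxa, hxb, hmka, hmkb⟩ := T.G.end_exists_componentComplMk_eq_pair infty a b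
  have h₁ := hab.dist_add_dist hxa hmka
  have h₂ := hba.dist_add_dist hxb hmkb
  rw [dist_comm] at h₁
  exact T.isTree.connected.dist_eq_zero_iff.mp (by omega)

/-- Vertices of nonnegative height lie on the ray from `v₀` to `infty`. -/
theorem eq_of_height_eq {u u' : V} (hu : 0 ≤ T.height infty v₀ u)
    (h : T.height infty v₀ u = T.height infty v₀ u') : u = u' := by
  obtain ⟨x, hxu, hxu', hmk, hmk'⟩ := T.G.end_exists_componentComplMk_eq_pair infty u u'
  obtain ⟨p, hp, -⟩ := T.isTree.connected.exists_path_of_dist v₀ x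
  have hdist := congrArg Int.natAbs h
  rw [natAbs_height, natAbs_height] at hdist
  exact T.isTree.eq_of_mem_support_of_dist_eq hp
    ((height_nonneg_iff.mp hu).mem_support hxu hmk p)
    ((height_nonneg_iff.mp (h ▸ hu)).mem_support hxu' hmk' p) hdist

theorem Below.below_of_adj {y z : V} (hy : T.Below infty y v₀) (hyz : T.G.Adj y z)
    (hz : z ∉ (({y} : Finset V) : Set V)) (hmk : T.G.componentComplMk hz = infty.val (op {y})) :
    T.Below infty z v₀ := by
  obtain ⟨x, hxy, hxz, hmky, hmkz⟩ := T.G.end_exists_componentComplMk_eq_pair infty y z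
  have hyz' : y ∉ (({z} : Finset V) : Set V) := by simpa using hyz.ne
  have hy_side : T.G.componentComplMk hyz' ≠ infty.val (op {z}) := by
    rw [← hmkz]
    exact ((T.isTree.componentComplMk_eq_iff_ne_of_adj hyz hxy hz hxz hyz').mp
      (hmky.trans hmk.symm)).symm
  by_cases hy₀ : v₀ = y
  · exact Or.inr ⟨hy₀ ▸ hyz', by subst hy₀; exact hy_side⟩
  have hv₀y : v₀ ∉ (({y} : Finset V) : Set V) := by simpa using hy₀
  have hv₀z : v₀ ∉ (({z} : Finset V) : Set V) := by
    rintro hv₀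
    simp only [Finset.coe_singleton, Set.mem_singleton_iff] at hv₀
    subst hv₀
    exact hy.componentComplMk_ne hz hmk
  have hv₀_side : T.G.componentComplMk hv₀z = T.G.componentComplMk hyz' := by
    by_contra hne
    exact hy.componentComplMk_ne hv₀y
      (((T.isTree.componentComplMk_eq_iff_ne_of_adj hyz hv₀y hz hv₀z hyz').mpr hne).trans hmk)
  exact Or.inr ⟨hv₀z, hv₀_side ▸ hy_side⟩

/-- A third side would give `z` valence at least three, putting it below the base. -/
theorem componentComplMk_eq_end_or_eq_of_adj (hbase : T.IsBase infty v₀) {z t : V}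
    (hz : T.Below infty z v₀) (hz₀ : z ≠ v₀) (hzt : T.G.Adj z t)
    (ht : t ∉ (({z} : Finset V) : Set V)) (hv₀ : v₀ ∉ (({z} : Finset V) : Set V)) :
    T.G.componentComplMk ht = infty.val (op {z}) ∨
      T.G.componentComplMk ht = T.G.componentComplMk hv₀ := by
  by_contra! ⟨h_end, h_side⟩
  have hpre := T.isTree.connected.preconnected
  obtain ⟨a, hza, ha⟩ :=
    T.G.exists_adj_mem_componentCompl_singleton hpre z (T.G.componentComplMk hv₀)
  obtain ⟨b, hzb, hb⟩ :=
    T.G.exists_adj_mem_componentCompl_singleton hpre z (infty.val (op {z}))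
  have ht' := T.G.componentComplMk_mem ht
  have hab : a ≠ b :=
    (ComponentCompl.pairwise_disjoint (hz.componentComplMk_ne hv₀)).ne_of_mem ha hb
  have hat : a ≠ t := (ComponentCompl.pairwise_disjoint (Ne.symm h_side)).ne_of_mem ha ht'
  have hbt : b ≠ t := (ComponentCompl.pairwise_disjoint (Ne.symm h_end)).ne_of_mem hb ht'
  have h3 : 3 ≤ (T.G.neighborSet z).ncard := by
    rw [← Set.ncard_eq_three.mpr ⟨a, b, t, hab, hat, hbt, rfl⟩]
    refine Set.ncard_le_ncard (fun w hw => ?_) (T.locFin z)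
    rcases hw with rfl | rfl | rfl
    exacts [hza, hzb, hzt]
  exact hz₀ (hz.antisymm (hbase.2 z h3))

theorem exists_adj_height_succ_of_nonneg {y : V} (hy : 0 ≤ T.height infty v₀ y) :
    ∃ z, T.G.Adj y z ∧ T.height infty v₀ z = T.height infty v₀ y + 1 := by
  have hby := height_nonneg_iff.mp hy
  obtain ⟨z, hyz, hzy, hmk⟩ := T.G.exists_adj_mem_componentCompl_singleton
    T.isTree.connected.preconnected y (infty.val (op {y}))
  have hdist := hby.dist_add_dist hzy hmk
  rw [dist_eq_one_iff_adj.mpr hyz] at hdist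
  refine ⟨z, hyz, ?_⟩
  rw [height_of_below (hby.below_of_adj hyz hzy hmk), height_of_below hby, ← hdist]
  push_cast
  rfl

theorem exists_adj_height_succ_of_neg (hbase : T.IsBase infty v₀) {u : V}
    (hu : T.height infty v₀ u < 0) :
    ∃ z, T.G.Adj u z ∧ T.height infty v₀ z = T.height infty v₀ u + 1 := by
  have hbu : ¬T.Below infty u v₀ := fun h => (height_nonneg_iff.mpr h).not_gt hu
  obtain ⟨p, hp, hlen⟩ := T.isTree.connected.exists_path_of_dist u v₀
  cases p with
  | nil => exact absurd (Or.inl rfl) hbu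
  | @cons _ z _ huz q =>
    refine ⟨z, huz, ?_⟩
    have hdist : T.G.dist v₀ z + 1 = T.G.dist v₀ u := by
      rw [Walk.length_cons, T.isTree.length_eq_dist_of_isPath hp.of_cons] at hlen
      rw [dist_comm, hlen, dist_comm]
    have hbz : ¬T.Below infty z v₀ ∨ z = v₀ := by
      refine or_iff_not_imp_right.mpr fun hz₀ hbz => ?_
      have hu' : u ∉ (({z} : Finset V) : Set V) := by simpa using huz.ne
      have hv₀ : v₀ ∉ (({z} : Finset V) : Set V) := by simpa using Ne.symm hz₀
      rcases componentComplMk_eq_end_or_eq_of_adj hbase hbz hz₀ huz.symm hu' hv₀ with h | h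
      · exact hbu (hbz.below_of_adj huz.symm hu' h)
      · exact (T.isTree.componentComplMk_ne_iff_mem_support hp hu' hv₀).mpr (by simp) h
    rw [height_of_not_below hbu, ← hdist]
    rcases hbz with hbz | rfl
    · rw [height_of_not_below hbz]
      push_cast
      ring
    · rw [height_of_below (Or.inl rfl), dist_self]
      simp

theorem exists_adj_height_succ (hbase : T.IsBase infty v₀) (y : V) :
    ∃ z, T.G.Adj y z ∧ T.height infty v₀ z = T.height infty v₀ y + 1 :=
  (le_or_gt 0 (T.height infty v₀ y)).elim exists_adj_height_succ_of_nonneg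
    (exists_adj_height_succ_of_neg hbase)

theorem eq_of_adj_of_height_eq_add_one {u z z' : V} (hz : T.G.Adj u z) (hz' : T.G.Adj u z')
    (h : T.height infty v₀ z = T.height infty v₀ u + 1)
    (h' : T.height infty v₀ z' = T.height infty v₀ u + 1) (hneg : T.height infty v₀ z < 0) :
    z = z' := by
  have du := natAbs_height (T := T) (infty := infty) (v₀ := v₀) u
  have dz := natAbs_height (T := T) (infty := infty) (v₀ := v₀) z
  have dz' := natAbs_height (T := T) (infty := infty) (v₀ := v₀) z'
  exact T.isTree.eq_of_adj_of_dist_add_one_eq (a := v₀) hz hz' (by omega) (by omega)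

theorem exists_ne_height_eq_neg_one (hbase : T.IsBase infty v₀) :
    ∃ a a', a ≠ a' ∧ T.height infty v₀ a = -1 ∧ T.height infty v₀ a' = -1 := by
  obtain ⟨a, ha, b, hb, c, hc, hab, hac, hbc⟩ := (Set.two_lt_ncard (T.locFin v₀)).mp hbase.1
  have hpm : ∀ x ∈ T.G.neighborSet v₀,
      T.height infty v₀ x = 1 ∨ T.height infty v₀ x = -1 := by
    intro x hx
    have := natAbs_height (T := T) (infty := infty) (v₀ := v₀) x
    rw [dist_eq_one_iff_adj.mpr hx] at this
    omega
  have hone : ∀ {x x'}, T.height infty v₀ x = 1 → T.height infty v₀ x' = 1 → x = x' :=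
    fun hx hx' => eq_of_height_eq (by omega) (hx.trans hx'.symm)
  rcases hpm a ha with h₁ | h₁ <;> rcases hpm b hb with h₂ | h₂
  · exact absurd (hone h₁ h₂) hab
  · rcases hpm c hc with h₃ | h₃
    · exact absurd (hone h₁ h₃) hac
    · exact ⟨b, c, hbc, h₂, h₃⟩
  · rcases hpm c hc with h₃ | h₃
    · exact absurd (hone h₂ h₃) hbc
    · exact ⟨a, c, hac, h₁, h₃⟩
  · exact ⟨a, b, hab, h₁, h₂⟩

/-- A common lift of `y` would have two neighbours one step closer to `v₀`. -/
theorem exists_ne_preimages_of_adj {N : ℕ}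
    (hN : ∀ v : V, T.height infty v₀ (T.F v) = T.height infty v₀ v + (N : ℤ))
    {y z x x' : V} (hyz : T.G.Adj y z) (hzy : T.height infty v₀ z = T.height infty v₀ y + 1)
    (hz : T.height infty v₀ z < N) (hx : x ≠ x') (hfx : T.F x = z) (hfx' : T.F x' = z) :
    ∃ u u', u ≠ u' ∧ T.F u = y ∧ T.F u' = y := by
  obtain ⟨u, hxu, hfu⟩ := T.edgeSurj (v := x) (hfx ▸ hyz.symm)
  obtain ⟨u', hxu', hfu'⟩ := T.edgeSurj (v := x') (hfx' ▸ hyz.symm)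
  refine ⟨u, u', fun huu => hx ?_, hfu, hfu'⟩
  subst huu
  have hhx := hN x
  have hhx' := hN x'
  have hhu := hN u
  rw [hfx] at hhx
  rw [hfx'] at hhx'
  rw [hfu] at hhu
  exact eq_of_adj_of_height_eq_add_one (infty := infty) (v₀ := v₀) hxu.symm hxu'.symm
    (by omega) (by omega) (by omega)

theorem exists_ne_preimages_of_height_eq {N : ℕ}
    (hN : ∀ v : V, T.height infty v₀ (T.F v) = T.height infty v₀ v + (N : ℤ))
    (hbase : T.IsBase infty v₀) (hN0 : 0 < N) {y : V}
    (hy : T.height infty v₀ y = N - 1) : ∃ x x', x ≠ x' ∧ T.F x = y ∧ T.F x' = y := by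
  obtain ⟨a, a', ha, h₁, h₂⟩ := exists_ne_height_eq_neg_one hbase
  have hFa := hN a
  have hFa' := hN a'
  exact ⟨a, a', ha, eq_of_height_eq (infty := infty) (v₀ := v₀) (by omega) (by omega),
    eq_of_height_eq (infty := infty) (v₀ := v₀) (by omega) (by omega)⟩

theorem exists_ne_preimages {N : ℕ}
    (hN : ∀ v : V, T.height infty v₀ (T.F v) = T.height infty v₀ v + (N : ℤ))
    (hbase : T.IsBase infty v₀) (hN0 : 0 < N) {y : V}
    (hy : T.height infty v₀ y < N) : ∃ x x', x ≠ x' ∧ T.F x = y ∧ T.F x' = y := by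
  obtain ⟨d, hd⟩ : ∃ d : ℕ, T.height infty v₀ y = N - 1 - d :=
    ⟨(N - 1 - T.height infty v₀ y).toNat, by omega⟩
  induction d generalizing y with
  | zero => exact exists_ne_preimages_of_height_eq hN hbase hN0 (by simpa using hd)
  | succ d ih =>
    obtain ⟨z, hyz, hzy⟩ := exists_adj_height_succ hbase y
    obtain ⟨x, x', hx, hfx, hfx'⟩ := ih (y := z) (by omega) (by push_cast at hd; omega)
    exact exists_ne_preimages_of_adj hN hyz hzy (by omega) hx hfx hfx'

variable {dV : V → ℕ} {dE : V → V → ℕ} {Dg : ℕ}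

theorem finsum_dV_fiber_eq (hdeg : T.IsLocalDeg dV dE) (hDg : T.IsGlobalDeg dE Dg) {w u : V}
    (hwu : T.G.Adj w u) : ∑ᶠ a ∈ {a | T.F a = w}, dV a = Dg := by
  rw [hDg hwu]
  refine finsum_mem_congr rfl fun a ha => ?_
  obtain ⟨b, hab, hfb⟩ := T.edgeSurj (v := a) ((show T.F a = w from ha) ▸ hwu)
  rw [hdeg.2.2.2.2 hab, hfb]

theorem dV_add_dV_le (hdeg : T.IsLocalDeg dV dE) (hDg : T.IsGlobalDeg dE Dg) {w u a b : V}
    (hwu : T.G.Adj w u) (hab : a ≠ b) (ha : T.F a = w) (hb : T.F b = w) : dV a + dV b ≤ Dg := by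
  classical
  rw [← finsum_dV_fiber_eq hdeg hDg hwu, finsum_mem_eq_finite_toFinset_sum _ (T.finFibers w),
    ← Finset.sum_pair hab]
  refine Finset.sum_le_sum_of_subset fun x hx => ?_
  rcases Finset.mem_insert.mp hx with rfl | hx
  · simpa using ha
  · simpa [Finset.mem_singleton.mp hx] using hb

theorem dV_lt_globalDeg (hdeg : T.IsLocalDeg dV dE) (hDg : T.IsGlobalDeg dE Dg)
    (hbase : T.IsBase infty v₀) {N : ℕ} (hN0 : 0 < N)
    (hN : ∀ v : V, T.height infty v₀ (T.F v) = T.height infty v₀ v + (N : ℤ)) {v : V}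
    (hv : T.height infty v₀ v < 0) : dV v < Dg := by
  obtain ⟨x, x', hx, hfx, hfx'⟩ :=
    exists_ne_preimages hN hbase hN0 (y := T.F v) (by rw [hN]; omega)
  obtain ⟨a, hav, hfa⟩ : ∃ a, a ≠ v ∧ T.F a = T.F v :=
    (em (x = v)).elim (fun hxv => ⟨x', hxv ▸ hx.symm, hfx'⟩) fun hxv => ⟨x, hxv, hfx⟩
  obtain ⟨u, hu, -⟩ := exists_adj_height_succ hbase (T.F v)
  have := dV_add_dV_le hdeg hDg hu (Ne.symm hav) rfl hfa
  have := hdeg.2.1 a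
  omega

theorem IsMass.eq_div_mul {μ : V → ℚ} (hμ : T.IsMass infty v₀ dV Dg μ) {v : V}
    (hv : 0 < dV v) (hDg : 0 < Dg) : μ v = dV v / Dg * μ (T.F v) := by
  rw [hμ.2 v]
  field_simp

end TreeDyn

theorem mass_diffusion_bound_general
    {V : Type} (T : TreeDyn V) (infty : T.G.end)
    (dV : V → ℕ) (dE : V → V → ℕ) (hdeg : T.IsLocalDeg dV dE)
    (v₀ : V) (hbase : T.IsBase infty v₀)
    (Dg : ℕ) (hDg : T.IsGlobalDeg dE Dg)
    (N : ℕ) (hN0 : 0 < N)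
    (hN : ∀ v : V, T.height infty v₀ (T.F v) = T.height infty v₀ v + (N : ℤ))
    (μ : V → ℚ) (hμ : T.IsMass infty v₀ dV Dg μ) :
    ∀ (k : ℕ) (v : V), T.height infty v₀ v = -((k * N : ℕ) : ℤ) →
      μ v ≤ (((Dg : ℚ) - 1) / (Dg : ℚ)) ^ k := by
  suffices h : ∀ (k : ℕ) (v : V), T.height infty v₀ v = -((k * N : ℕ) : ℤ) →
      0 ≤ μ v ∧ μ v ≤ (((Dg : ℚ) - 1) / (Dg : ℚ)) ^ k from fun k v hv => (h k v hv).2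
  intro k
  induction k with
  | zero => intro v hv; simp [hμ.1 v (by simp [hv])]
  | succ k ih =>
    intro v hv
    have hFv : T.height infty v₀ (T.F v) = -((k * N : ℕ) : ℤ) := by
      rw [hN, hv]; push_cast; ring
    have hdv := hdeg.2.1 v
    have hlt : dV v < Dg :=
      TreeDyn.dV_lt_globalDeg hdeg hDg hbase hN0 hN (by rw [hv]; push_cast; nlinarith)
    have hdvQ : (dV v : ℚ) + 1 ≤ Dg := by exact_mod_cast hlt
    have hr : 0 ≤ ((Dg : ℚ) - 1) / Dg := div_nonneg (by linarith) (by positivity)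
    obtain ⟨hμ₀, hμle⟩ := ih (T.F v) hFv
    rw [hμ.eq_div_mul hdv (hdv.trans hlt)]
    refine ⟨by positivity, ?_⟩
    calc (dV v : ℚ) / Dg * μ (T.F v)
        ≤ ((Dg : ℚ) - 1) / Dg * (((Dg : ℚ) - 1) / Dg) ^ k := by gcongr; linarith
      _ = (((Dg : ℚ) - 1) / Dg) ^ (k + 1) := by ring

/-- **Diffusion of mass.**
Let `F : T → T` be a polynomial-like branched covering with local degree
function `(dV, dE)`, global degree `Dg`, base `v₀`, translation constant `N`
and mass function `μ`.  Then for every `k ≥ 0` and every vertex `v` with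
`h(v) = −k·N`, one has `μ v ≤ ((Dg − 1)/Dg)^k`. -/
theorem mass_diffusion_bound
    {V : Type} (T : TreeDyn V) (infty : T.G.end)
    (hpl : T.IsPolyLike infty)
    (dV : V → ℕ) (dE : V → V → ℕ) (hdeg : T.IsLocalDeg dV dE)
    (v₀ : V) (hbase : T.IsBase infty v₀)
    (Dg : ℕ) (hDg : T.IsGlobalDeg dE Dg)
    (N : ℕ) (hN0 : 0 < N)
    (hN : ∀ v : V, T.height infty v₀ (T.F v) = T.height infty v₀ v + (N : ℤ))
    (μ : V → ℚ) (hμ : T.IsMass infty v₀ dV Dg μ) :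
    ∀ (k : ℕ) (v : V), T.height infty v₀ v = -((k * N : ℕ) : ℤ) →
      μ v ≤ (((Dg : ℚ) - 1) / (Dg : ℚ)) ^ k :=
  mass_diffusion_bound_general T infty dV dE hdeg v₀ hbase Dg hDg N hN0 hN μ hμ
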